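/- arXiv:1411.7966 — 6 statements merged into one kernel-verified Lean document; each statement's English description precedes it below -/
import Mathlib

section
/- Let α, β ∈ (0, π/2), F > 0, L > 0, ρ_b, σ_b, ρ_s, σ_s > 0 and set ρ = (ρ_b/σ_b)/(ρ_s/σ_s). Let the member lengths be s₁ = L/2, s₂ = (L/2) tan α, s₃ = L/(2 cos β), b₁ = L/(2 cos α), b₂ = (L/2) tan β, and let the forces f₁, f₂, t₂ be given in terms of free parameters t₁, t₃ by f₁ = (F √(1+tan²α)/(4 tan α))·(1 − (t₃/F)·4 tan β/√(1+tan²β)), f₂ = 2 t₃ tan β/√(1+tan²β), t₂ = F/2 − 2 t₃ tan β/√(1+tan²β). Then the normalized total mass μ = [(ρ_b/σ_b)(2 f₁ b₁ + f₂ b₂) + (ρ_s/σ_s)(2 t₁ s₁ + t₂ s₂ + 2 t₃ s₃)]/((ρ_s/σ_s) F L) satisfies μ = t₁/F + (t₃/F)·c₃ + b_α/4, where b_α = (ρ + (1+ρ) tan²α)/tan α and c₃ = ((1+ρ) tan²β − b_α tan β + 1)/√(1+tan²β). -/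
/-!
Since `α, β ∈ (0, π/2)`, the secants in `b₁` and `s₃` equal `√(1 + tan² α)` and `√(1 + tan² β)`,
so every member length and force is a rational expression in `tan α`, `tan β` and these two square
roots. Writing `ρ_b/σ_b = ρ · ρ_s/σ_s`, the normalized mass becomes an identity of rational functions
that holds modulo the two relations `(√(1 + tan² x))² = 1 + tan² x`.
-/

open Real

theorem div_cos_eq_mul_sqrt_one_add_tan_sq {x : ℝ} (hx : 0 < cos x) (a : ℝ) :
    a / cos x = a * √(1 + tan x ^ 2) := by
  rw [← inv_sqrt_one_add_tan_sq hx, div_inv_eq_mul]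

/-- `T = tan α`, `U = tan β`, `A = √(1 + T²)`, `B = √(1 + U²)`, `k = ρ_s/σ_s`. -/
theorem normalized_mass_identity {F L k ρ T U A B t₁ t₃ : ℝ}
    (hF : F ≠ 0) (hL : L ≠ 0) (hk : k ≠ 0) (hT : T ≠ 0) (hB : B ≠ 0)
    (hA2 : A ^ 2 = 1 + T ^ 2) (hB2 : B ^ 2 = 1 + U ^ 2) :
    (ρ * k * (2 * (F * A / (4 * T) * (1 - t₃ / F * (4 * U / B))) * (L / 2 * A) +
        2 * t₃ * U / B * (L / 2 * U)) +
      k * (2 * t₁ * (L / 2) + (F / 2 - 2 * t₃ * U / B) * (L / 2 * T) + 2 * t₃ * (L / 2 * B))) /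
        (k * F * L) =
      t₁ / F + t₃ / F * (((1 + ρ) * U ^ 2 - (ρ + (1 + ρ) * T ^ 2) / T * U + 1) / B) +
        (ρ + (1 + ρ) * T ^ 2) / T / 4 := by
  field_simp
  linear_combination (4 * ρ * F * B - 16 * ρ * t₃ * U) * hA2 + 16 * t₃ * T * hB2

theorem nominal_bridge_normalized_mass_general
    (α β F L ρb σb ρs σs ρ t₁ t₃ f₁ f₂ t₂ s₁ s₂ s₃ b₁ b₂ μ bα c₃ : ℝ)
    (hα : α ∈ Set.Ioo 0 (π / 2)) (hβ : β ∈ Set.Ioo 0 (π / 2))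
    (hF : 0 < F) (hL : 0 < L)
    (hρs : 0 < ρs) (hσs : 0 < σs)
    (hρ : ρ = (ρb / σb) / (ρs / σs))
    (hs₁ : s₁ = L / 2)
    (hs₂ : s₂ = L / 2 * Real.tan α)
    (hs₃ : s₃ = L / (2 * Real.cos β))
    (hb₁ : b₁ = L / (2 * Real.cos α))
    (hb₂ : b₂ = L / 2 * Real.tan β)
    (hf₁ : f₁ = F * Real.sqrt (1 + Real.tan α ^ 2) / (4 * Real.tan α) *
        (1 - t₃ / F * (4 * Real.tan β / Real.sqrt (1 + Real.tan β ^ 2))))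
    (hf₂ : f₂ = 2 * t₃ * Real.tan β / Real.sqrt (1 + Real.tan β ^ 2))
    (ht₂ : t₂ = F / 2 - 2 * t₃ * Real.tan β / Real.sqrt (1 + Real.tan β ^ 2))
    (hμ : μ = (ρb / σb * (2 * f₁ * b₁ + f₂ * b₂) +
        ρs / σs * (2 * t₁ * s₁ + t₂ * s₂ + 2 * t₃ * s₃)) / (ρs / σs * F * L))
    (hbα : bα = (ρ + (1 + ρ) * Real.tan α ^ 2) / Real.tan α)
    (hc₃ : c₃ = ((1 + ρ) * Real.tan β ^ 2 - bα * Real.tan β + 1) /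
        Real.sqrt (1 + Real.tan β ^ 2)) :
    μ = t₁ / F + t₃ / F * c₃ + bα / 4 := by
  have hk : ρs / σs ≠ 0 := by positivity
  have hρb : ρb / σb = ρ * (ρs / σs) := by rw [hρ, div_mul_cancel₀ _ hk]
  have hcos {x : ℝ} (hx : x ∈ Set.Ioo 0 (π / 2)) : 0 < cos x :=
    cos_pos_of_mem_Ioo ⟨by linarith [pi_pos, hx.1], hx.2⟩
  have hb₁' : b₁ = L / 2 * √(1 + tan α ^ 2) := by
    rw [hb₁, div_mul_eq_div_div, div_cos_eq_mul_sqrt_one_add_tan_sq (hcos hα)]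
  have hs₃' : s₃ = L / 2 * √(1 + tan β ^ 2) := by
    rw [hs₃, div_mul_eq_div_div, div_cos_eq_mul_sqrt_one_add_tan_sq (hcos hβ)]
  subst hμ hbα hc₃ hb₁' hs₃' hs₁ hs₂ hb₂ hf₁ hf₂ ht₂
  rw [hρb]
  exact normalized_mass_identity hF.ne' hL.ne' hk (tan_pos_of_pos_of_lt_pi_div_two hα.1 hα.2).ne'
    (by positivity) (sq_sqrt (by positivity)) (sq_sqrt (by positivity))

theorem nominal_bridge_normalized_mass
    (α β F L ρb σb ρs σs ρ t₁ t₃ f₁ f₂ t₂ s₁ s₂ s₃ b₁ b₂ μ bα c₃ : ℝ)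
    (hα : α ∈ Set.Ioo 0 (π / 2)) (hβ : β ∈ Set.Ioo 0 (π / 2))
    (hF : 0 < F) (hL : 0 < L)
    (hρb : 0 < ρb) (hσb : 0 < σb) (hρs : 0 < ρs) (hσs : 0 < σs)
    (hρ : ρ = (ρb / σb) / (ρs / σs))
    (hs₁ : s₁ = L / 2)
    (hs₂ : s₂ = L / 2 * Real.tan α)
    (hs₃ : s₃ = L / (2 * Real.cos β))
    (hb₁ : b₁ = L / (2 * Real.cos α))
    (hb₂ : b₂ = L / 2 * Real.tan β)
    (hf₁ : f₁ = F * Real.sqrt (1 + Real.tan α ^ 2) / (4 * Real.tan α) *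
        (1 - t₃ / F * (4 * Real.tan β / Real.sqrt (1 + Real.tan β ^ 2))))
    (hf₂ : f₂ = 2 * t₃ * Real.tan β / Real.sqrt (1 + Real.tan β ^ 2))
    (ht₂ : t₂ = F / 2 - 2 * t₃ * Real.tan β / Real.sqrt (1 + Real.tan β ^ 2))
    (hμ : μ = (ρb / σb * (2 * f₁ * b₁ + f₂ * b₂) +
        ρs / σs * (2 * t₁ * s₁ + t₂ * s₂ + 2 * t₃ * s₃)) / (ρs / σs * F * L))
    (hbα : bα = (ρ + (1 + ρ) * Real.tan α ^ 2) / Real.tan α)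
    (hc₃ : c₃ = ((1 + ρ) * Real.tan β ^ 2 - bα * Real.tan β + 1) /
        Real.sqrt (1 + Real.tan β ^ 2)) :
    μ = t₁ / F + t₃ / F * c₃ + bα / 4 :=
  nominal_bridge_normalized_mass_general α β F L ρb σb ρs σs ρ t₁ t₃ f₁ f₂ t₂ s₁ s₂ s₃ b₁ b₂ μ bα c₃
    hα hβ hF hL hρs hσs hρ hs₁ hs₂ hs₃ hb₁ hb₂ hf₁ hf₂ ht₂ hμ hbα hc₃
end

section
/- Let ρ > 0. The function μ_Y(α) = (tan α)/4 + ρ (1 + tan²α)/(4 tan α), defined for α ∈ (0, π/2), attains its unique global minimum at α*_Y = arctan(√(ρ/(1+ρ))), and the minimum value is μ*_Y = (1/2) √(ρ(1+ρ)). -/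
/-!
With `t = tan α > 0` and `s = √(ρ / (1 + ρ))`, so that `ρ = s² (1 + ρ)`, the mass is
`μ_Y = (1 + ρ) / 4 · (t + s² / t)`. By AM-GM, `t + s² / t = 2 s + (t - s)² / t ≥ 2 s`, with equality
exactly at `t = s`, i.e. at `α = arctan s`, since `tan` is injective on `(0, π / 2)`.
-/

open Real

lemma two_mul_lt_add_sq_div {s t : ℝ} (ht : 0 < t) (hts : t ≠ s) : 2 * s < t + s ^ 2 / t := by
  have hsq : 0 < (t - s) ^ 2 / t := div_pos (sq_pos_of_ne_zero (sub_ne_zero.mpr hts)) ht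
  have hexpand : t + s ^ 2 / t = 2 * s + (t - s) ^ 2 / t := by field_simp; ring
  linarith

lemma sqrt_mul_eq_mul_sqrt_div (a : ℝ) {c : ℝ} (hc : 0 ≤ c) : √(a * c) = c * √(a / c) := by
  rcases hc.eq_or_lt with rfl | hc
  · simp
  · rw [← sqrt_sq hc.le, ← sqrt_mul (sq_nonneg c), sqrt_sq hc.le]
    congr 1
    field_simp

lemma arctan_mem_Ioo_zero_pi_div_two {x : ℝ} (hx : 0 < x) : arctan x ∈ Set.Ioo 0 (π / 2) :=
  ⟨arctan_pos.mpr hx, arctan_lt_pi_div_two x⟩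

lemma yield_mass_eq {ρ s t : ℝ} (ht : t ≠ 0) (hs : s ^ 2 * (1 + ρ) = ρ) :
    t / 4 + ρ * (1 + t ^ 2) / (4 * t) = (1 + ρ) / 4 * (t + s ^ 2 / t) := by
  field_simp
  linear_combination -hs

theorem superstructure_yield_optimal_angle (ρ : ℝ) (hρ : 0 < ρ)
    (μY : ℝ → ℝ)
    (hμY : ∀ α, μY α = Real.tan α / 4 + ρ * (1 + Real.tan α ^ 2) / (4 * Real.tan α))
    (αY : ℝ) (hαY : αY = Real.arctan (Real.sqrt (ρ / (1 + ρ)))) :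
    αY ∈ Set.Ioo 0 (π / 2) ∧
    (∀ α ∈ Set.Ioo 0 (π / 2), α ≠ αY → μY αY < μY α) ∧
    μY αY = 1 / 2 * Real.sqrt (ρ * (1 + ρ)) := by
  subst hαY
  set s := √(ρ / (1 + ρ))
  have hs : 0 < s := sqrt_pos.mpr (by positivity)
  have hs2 : s ^ 2 * (1 + ρ) = ρ := by
    rw [sq_sqrt (by positivity)]
    field_simp
  have hmin : μY (arctan s) = (1 + ρ) / 4 * (2 * s) := by
    rw [hμY, tan_arctan, yield_mass_eq hs.ne' hs2]
    field_simp
    ring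
  refine ⟨arctan_mem_Ioo_zero_pi_div_two hs, fun α hα hne => ?_, ?_⟩
  · have htan : 0 < tan α := tan_pos_of_pos_of_lt_pi_div_two hα.1 hα.2
    have htan_ne : tan α ≠ s := fun h => hne <| by
      rw [← h, arctan_tan (by linarith [hα.1, pi_pos]) hα.2]
    rw [hmin, hμY, yield_mass_eq htan.ne' hs2]
    exact mul_lt_mul_of_pos_left (two_mul_lt_add_sq_div htan htan_ne) (by positivity)
  · rw [hmin, sqrt_mul_eq_mul_sqrt_div ρ (by positivity : (0 : ℝ) ≤ 1 + ρ)]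
    ring
end

section
/- The function g(t) = (1 + t²)^{5/4}/√t, defined for t > 0, attains its unique global minimum at t = 1/2. Consequently, for every η > 0 the bar-mass function μ̄_B(α) = η (1 + tan²α)^{5/4}/(2 √(tan α)) on (0, π/2) attains its unique global minimum at α*_B = arctan(1/2), and the full normalized mass μ_B(α) = (tan α)/4 + η (1 + tan²α)^{5/4}/(2 √(tan α)) evaluated at α = arctan(1/2) equals (1 + 5^{5/4} η)/8. -/
/-!
Raising `g t = (1 + t²)^{5/4} / √t` to the fourth power removes the radicals:
`g t ^ 4 = (1 + t²)⁵ / t²`, and `256 (1 + t²)⁵ - 3125 t²` factors as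
`(2t - 1)² (2t + 1)² (16t⁶ + 88t⁴ + 203t² + 256)`, which is positive for `t > 0`, `t ≠ 1/2`.
Along `t = tan α` the bar mass is `η/2 · g (tan α)`, and `tan` is injective on `(0, π/2)`,
so the minimiser in `α` is `arctan (1/2)`, where `g` takes the value `5^{5/4}/4`.
-/

open Real

noncomputable def bucklingProfile (t : ℝ) : ℝ :=
  (1 + t ^ 2) ^ ((5 : ℝ) / 4) / √t

lemma bucklingProfile_pos {t : ℝ} (ht : 0 < t) : 0 < bucklingProfile t :=
  div_pos (rpow_pos_of_pos (by positivity) _) (sqrt_pos.2 ht)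

lemma bucklingProfile_pow_four {t : ℝ} (ht : 0 ≤ t) :
    bucklingProfile t ^ 4 = (1 + t ^ 2) ^ 5 / t ^ 2 := by
  rw [bucklingProfile, div_pow, ← rpow_natCast _ 4, ← rpow_mul (by positivity),
    show (4 : ℕ) = 2 * 2 from rfl, pow_mul, sq_sqrt ht]
  norm_num

lemma bucklingProfile_half_lt {t : ℝ} (ht : 0 < t) (hne : t ≠ 1 / 2) :
    bucklingProfile (1 / 2) < bucklingProfile t := by
  refine lt_of_pow_lt_pow_left₀ 4 (bucklingProfile_pos ht).le ?_
  rw [bucklingProfile_pow_four ht.le, bucklingProfile_pow_four (by norm_num),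
    div_lt_div_iff₀ (by positivity) (by positivity)]
  have hfactor : 256 * (1 + t ^ 2) ^ 5 - 3125 * t ^ 2 =
      (2 * t - 1) ^ 2 * (2 * t + 1) ^ 2 * (16 * t ^ 6 + 88 * t ^ 4 + 203 * t ^ 2 + 256) := by
    ring
  have hgap : 0 < (2 * t - 1) ^ 2 * (2 * t + 1) ^ 2 *
      (16 * t ^ 6 + 88 * t ^ 4 + 203 * t ^ 2 + 256) := by
    have : 2 * t - 1 ≠ 0 := fun h => hne (by linarith)
    positivity
  nlinarith

lemma bucklingProfile_half : bucklingProfile (1 / 2) = 5 ^ ((5 : ℝ) / 4) / 4 := by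
  refine (pow_left_inj₀ (bucklingProfile_pos (by norm_num)).le (by positivity)
    (by norm_num : (4 : ℕ) ≠ 0)).1 ?_
  rw [bucklingProfile_pow_four (by norm_num), div_pow ((5 : ℝ) ^ _), ← rpow_natCast _ 4,
    ← rpow_mul (by norm_num)]
  norm_num

lemma tan_ne_of_ne_arctan {α x : ℝ} (hα : α ∈ Set.Ioo (-(π / 2)) (π / 2))
    (hne : α ≠ arctan x) : tan α ≠ x := fun h =>
  hne (injOn_tan hα (arctan_mem_Ioo x) (by rw [h, tan_arctan]))

theorem superstructure_buckling_optimal_angle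
    (g : ℝ → ℝ)
    (hg : ∀ t, g t = (1 + t ^ 2) ^ ((5 : ℝ) / 4) / Real.sqrt t) :
    ((1 : ℝ) / 2 > 0 ∧ ∀ t > (0 : ℝ), t ≠ 1 / 2 → g (1 / 2) < g t) ∧
    (∀ η > (0 : ℝ), ∀ μbarB : ℝ → ℝ,
      (∀ α, μbarB α = η * (1 + Real.tan α ^ 2) ^ ((5 : ℝ) / 4) /
          (2 * Real.sqrt (Real.tan α))) →
      (Real.arctan (1 / 2) ∈ Set.Ioo 0 (π / 2) ∧
        ∀ α ∈ Set.Ioo 0 (π / 2), α ≠ Real.arctan (1 / 2) →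
          μbarB (Real.arctan (1 / 2)) < μbarB α)) ∧
    (∀ η > (0 : ℝ), ∀ μB : ℝ → ℝ,
      (∀ α, μB α = Real.tan α / 4 +
          η * (1 + Real.tan α ^ 2) ^ ((5 : ℝ) / 4) / (2 * Real.sqrt (Real.tan α))) →
      μB (Real.arctan (1 / 2)) = (1 + 5 ^ ((5 : ℝ) / 4) * η) / 8) := by
  obtain rfl : g = bucklingProfile := funext hg
  have hbar (η α : ℝ) : η * (1 + tan α ^ 2) ^ ((5 : ℝ) / 4) / (2 * √(tan α)) =
      η / 2 * bucklingProfile (tan α) := by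
    rw [bucklingProfile]; ring
  refine ⟨⟨by norm_num, fun t ht hne => bucklingProfile_half_lt ht hne⟩,
    fun η hη μbarB hμ => ⟨arctan_mem_Ioo_zero_pi_div_two (by norm_num), fun α hα hne => ?_⟩,
    fun η _ μB hμ => ?_⟩
  · have hα' : α ∈ Set.Ioo (-(π / 2)) (π / 2) := ⟨by linarith [hα.1, pi_pos], hα.2⟩
    rw [hμ, hμ, hbar, hbar, tan_arctan]
    exact mul_lt_mul_of_pos_left (bucklingProfile_half_lt
      (tan_pos_of_pos_of_lt_pi_div_two hα.1 hα.2) (tan_ne_of_ne_arctan hα' hne)) (by positivity)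
  · rw [hμ, hbar, tan_arctan, bucklingProfile_half]
    ring
end

section
/- Let ρ > 0. The function h(α) = (α/4)(1 + ρ) + ρ/(4 tan α), defined for α ∈ (0, π/2), attains its unique global minimum at α*_Y = arctan(√ρ), and the minimum value is (1/4)·[(1 + ρ) arctan(√ρ) + √ρ]. -/
/-!
In the variable `t = tan α ∈ (0, ∞)` the mass becomes `4 h = (1 + ρ) arctan t + ρ / t`, whose
derivative `(t² - ρ) / (t² (1 + t²))` changes sign only at `t = √ρ`. Hence this function
strictly decreases on `(0, √ρ]` and strictly increases on `[√ρ, ∞)`, and since `tan` is a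
bijection from `(0, π/2)` onto `(0, ∞)`, `h` has its unique minimum at `arctan √ρ`, where
`ρ / tan α = √ρ`.
-/

open Real Set

namespace Superstructure

noncomputable def tanMass (ρ t : ℝ) : ℝ := (1 + ρ) * arctan t + ρ / t

variable {ρ : ℝ}

theorem hasDerivAt_tanMass {t : ℝ} (ht : t ≠ 0) :
    HasDerivAt (tanMass ρ) ((t ^ 2 - ρ) / (t ^ 2 * (1 + t ^ 2))) t := by
  have h := ((hasDerivAt_arctan t).const_mul (1 + ρ)).add ((hasDerivAt_inv ht).const_mul ρ)
  refine (h.congr_deriv ?_).congr_of_eventuallyEq (Filter.Eventually.of_forall fun _ => ?_)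
  · field_simp
    ring
  · simp [tanMass, div_eq_mul_inv]

theorem strictAntiOn_tanMass : StrictAntiOn (tanMass ρ) (Ioc 0 √ρ) := by
  refine strictAntiOn_of_deriv_neg (convex_Ioc 0 √ρ)
    (fun t ht => (hasDerivAt_tanMass ht.1.ne').continuousAt.continuousWithinAt) fun t ht => ?_
  rw [interior_Ioc] at ht
  have ht0 : 0 < t := ht.1
  have hsq : t ^ 2 < ρ := (lt_sqrt ht0.le).1 ht.2
  rw [(hasDerivAt_tanMass ht0.ne').deriv]
  exact div_neg_of_neg_of_pos (by linarith) (by positivity)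

theorem strictMonoOn_tanMass (hρ : 0 < ρ) : StrictMonoOn (tanMass ρ) (Ici √ρ) := by
  have hsqrt : 0 < √ρ := sqrt_pos.2 hρ
  refine strictMonoOn_of_deriv_pos (convex_Ici √ρ)
    (fun t ht => (hasDerivAt_tanMass (hsqrt.trans_le ht).ne').continuousAt.continuousWithinAt)
    fun t ht => ?_
  rw [interior_Ici] at ht
  have ht0 : 0 < t := hsqrt.trans ht
  have hsq : ρ < t ^ 2 := (sqrt_lt' ht0).1 ht
  rw [(hasDerivAt_tanMass ht0.ne').deriv]
  exact div_pos (by linarith) (by positivity)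

theorem tanMass_sqrt_lt (hρ : 0 < ρ) {t : ℝ} (ht : 0 < t) (hne : t ≠ √ρ) :
    tanMass ρ √ρ < tanMass ρ t := by
  have hsqrt : 0 < √ρ := sqrt_pos.2 hρ
  rcases hne.lt_or_gt with hlt | hgt
  · exact strictAntiOn_tanMass ⟨ht, hlt.le⟩ ⟨hsqrt, le_rfl⟩ hlt
  · exact strictMonoOn_tanMass hρ (le_refl √ρ) hgt.le hgt

theorem tanMass_tan {α : ℝ} (hα : α ∈ Ioo 0 (π / 2)) :
    tanMass ρ (tan α) = α * (1 + ρ) + ρ / tan α := by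
  rw [tanMass, arctan_tan (by linarith [hα.1, pi_pos]) hα.2, mul_comm]

theorem tanMass_sqrt : tanMass ρ √ρ = (1 + ρ) * arctan √ρ + √ρ := by
  rw [tanMass, div_sqrt]

end Superstructure

open Superstructure in
theorem superstructure_infinite_complexity_yield_optimum (ρ : ℝ) (hρ : 0 < ρ)
    (h : ℝ → ℝ)
    (hh : ∀ α, h α = α / 4 * (1 + ρ) + ρ / (4 * Real.tan α))
    (αY : ℝ) (hαY : αY = Real.arctan (Real.sqrt ρ)) :
    αY ∈ Set.Ioo 0 (π / 2) ∧
    (∀ α ∈ Set.Ioo 0 (π / 2), α ≠ αY → h αY < h α) ∧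
    h αY = 1 / 4 * ((1 + ρ) * Real.arctan (Real.sqrt ρ) + Real.sqrt ρ) := by
  have hh' : ∀ α ∈ Ioo 0 (π / 2), h α = tanMass ρ (tan α) / 4 := fun α hα => by
    rw [hh, tanMass_tan hα]
    ring
  have hmem : αY ∈ Ioo 0 (π / 2) := hαY ▸ ⟨arctan_pos.2 (sqrt_pos.2 hρ), arctan_lt_pi_div_two _⟩
  have htanY : tan αY = √ρ := by rw [hαY, tan_arctan]
  refine ⟨hmem, fun α hα hne => ?_, ?_⟩
  · have htan : tan α ≠ √ρ := fun heq =>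
      hne (by rw [hαY, ← heq, arctan_tan (by linarith [hα.1, pi_pos]) hα.2])
    rw [hh' α hα, hh' αY hmem, htanY]
    exact div_lt_div_of_pos_right
      (tanMass_sqrt_lt hρ (tan_pos_of_pos_of_lt_pi_div_two hα.1 hα.2) htan) four_pos
  · rw [hh' αY hmem, htanY, tanMass_sqrt]
    ring
end

section
/- Let ρ > 0. The function h(β) = (β/4)(1 + ρ) + 1/(4 tan β), defined for β ∈ (0, π/2), attains its unique global minimum at β*_Y = arctan(1/√ρ), and the minimum value is (1/4)·[√ρ + (1 + ρ) arctan(1/√ρ)]. -/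
/-!
Writing `t = tan β`, one has `h'(β) = (ρ - t⁻²) / 4`, because `tan' = 1 + tan²`.
On `(0, π/2)` the tangent increases from `0` to `∞`, so `h'` is negative for `t < 1/√ρ`
and positive for `t > 1/√ρ`: `h` strictly decreases up to `arctan (1/√ρ)` and strictly
increases after it. At that point `1 / tan β = √ρ`, which gives the minimum value.
-/

open Real Set

theorem lt_of_hasDerivAt_neg_left_pos_right {f f' : ℝ → ℝ} {a b c x : ℝ}
    (hf : ∀ y ∈ Ioo a b, HasDerivAt f (f' y) y) (hneg : ∀ y ∈ Ioo a c, f' y < 0)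
    (hpos : ∀ y ∈ Ioo c b, 0 < f' y) (hc : c ∈ Ioo a b) (hx : x ∈ Ioo a b) (hxc : x ≠ c) :
    f c < f x := by
  have hcont : ContinuousOn f (Ioo a b) := fun y hy => (hf y hy).continuousAt.continuousWithinAt
  rcases hxc.lt_or_gt with hlt | hgt
  · have hanti : StrictAntiOn f (Icc x c) := by
      refine strictAntiOn_of_hasDerivWithinAt_neg (f' := f') (convex_Icc x c)
        (hcont.mono (Icc_subset_Ioo hx.1 hc.2)) ?_ ?_ <;> rw [interior_Icc] <;> intro y hy
      · exact (hf y ⟨hx.1.trans hy.1, hy.2.trans hc.2⟩).hasDerivWithinAt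
      · exact hneg y ⟨hx.1.trans hy.1, hy.2⟩
    exact hanti (left_mem_Icc.2 hlt.le) (right_mem_Icc.2 hlt.le) hlt
  · have hmono : StrictMonoOn f (Icc c x) := by
      refine strictMonoOn_of_hasDerivWithinAt_pos (f' := f') (convex_Icc c x)
        (hcont.mono (Icc_subset_Ioo hc.1 hx.2)) ?_ ?_ <;> rw [interior_Icc] <;> intro y hy
      · exact (hf y ⟨hc.1.trans hy.1, hy.2.trans hx.2⟩).hasDerivWithinAt
      · exact hpos y ⟨hy.1, hy.2.trans hx.2⟩
    exact hmono (left_mem_Icc.2 hgt.le) (right_mem_Icc.2 hgt.le) hgt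

theorem hasDerivAt_inv_tan {x : ℝ} (hcos : cos x ≠ 0) (htan : tan x ≠ 0) :
    HasDerivAt (fun y => (tan y)⁻¹) (-(1 + (tan x)⁻¹ ^ 2)) x := by
  refine ((hasDerivAt_tan hcos).inv htan).congr_deriv ?_
  rw [one_div, ← inv_one_add_tan_sq hcos]
  field_simp
  ring

theorem strictMonoOn_sub_inv_tan_sq (ρ : ℝ) :
    StrictMonoOn (fun y => ρ - (tan y)⁻¹ ^ 2) (Ioo 0 (π / 2)) := by
  intro a ha b hb hab
  have hpos : 0 < tan a := tan_pos_of_pos_of_lt_pi_div_two ha.1 ha.2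
  have hpos' : 0 < tan b := tan_pos_of_pos_of_lt_pi_div_two hb.1 hb.2
  have hlt : tan a < tan b :=
    tan_lt_tan_of_lt_of_lt_pi_div_two (by linarith [pi_pos, ha.1]) hb.2 hab
  dsimp only
  gcongr

theorem hasDerivAt_yield_mass (ρ : ℝ) {β : ℝ} (hcos : cos β ≠ 0) (htan : tan β ≠ 0) :
    HasDerivAt (fun β => β / 4 * (1 + ρ) + 1 / (4 * tan β)) ((ρ - (tan β)⁻¹ ^ 2) / 4) β := by
  have hfun : (fun β => β / 4 * (1 + ρ) + 1 / (4 * tan β)) =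
      fun β => β / 4 * (1 + ρ) + (tan β)⁻¹ / 4 := by
    funext y
    ring
  rw [hfun]
  exact (((hasDerivAt_id' β).div_const 4).mul_const (1 + ρ)).add
    ((hasDerivAt_inv_tan hcos htan).div_const 4) |>.congr_deriv (by ring)

theorem substructure_infinite_complexity_yield_optimum (ρ : ℝ) (hρ : 0 < ρ)
    (h : ℝ → ℝ)
    (hh : ∀ β, h β = β / 4 * (1 + ρ) + 1 / (4 * Real.tan β))
    (βY : ℝ) (hβY : βY = Real.arctan (1 / Real.sqrt ρ)) :
    βY ∈ Set.Ioo 0 (π / 2) ∧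
    (∀ β ∈ Set.Ioo 0 (π / 2), β ≠ βY → h βY < h β) ∧
    h βY = 1 / 4 * (Real.sqrt ρ + (1 + ρ) * Real.arctan (1 / Real.sqrt ρ)) := by
  obtain rfl : h = fun β => β / 4 * (1 + ρ) + 1 / (4 * tan β) := funext hh
  subst hβY
  have hsqrt : 0 < √ρ := sqrt_pos.2 hρ
  have hmem : arctan (1 / √ρ) ∈ Ioo 0 (π / 2) :=
    ⟨arctan_pos.2 (by positivity), arctan_lt_pi_div_two _⟩
  have htan {y : ℝ} (hy : y ∈ Ioo 0 (π / 2)) : 0 < tan y :=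
    tan_pos_of_pos_of_lt_pi_div_two hy.1 hy.2
  have hcritical : ρ - (tan (arctan (1 / √ρ)))⁻¹ ^ 2 = 0 := by
    rw [tan_arctan, one_div, inv_inv, sq_sqrt hρ.le, sub_self]
  refine ⟨hmem, fun β hβ hne => ?_, ?_⟩
  · refine lt_of_hasDerivAt_neg_left_pos_right (fun y hy => hasDerivAt_yield_mass ρ
      (cos_pos_of_mem_Ioo ⟨by linarith [pi_pos, hy.1], hy.2⟩).ne' (htan hy).ne')
      (fun y hy => ?_) (fun y hy => ?_) hmem hβ hne
    · have := strictMonoOn_sub_inv_tan_sq ρ ⟨hy.1, hy.2.trans hmem.2⟩ hmem hy.2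
      linarith
    · have := strictMonoOn_sub_inv_tan_sq ρ hmem ⟨hmem.1.trans hy.1, hy.2⟩ hy.1
      linarith
  · simp only [tan_arctan]
    field_simp
    ring
end

section
/- Let F, L, g, w_d, ρ_d, σ_d be positive real numbers and let n ≥ 1 be a natural number. Define c₁ = 3 w_d g ρ_d² L³/(8 σ_d), c₂ = 16 σ_d F/(3 w_d g² L³ ρ_d²), and ℓ_d = L/2ⁿ. Then m_d = c₁ 2^{-3n} + c₁ 2^{-2n} √(c₂ + 2^{-2n}) is the unique positive real number satisfying the deck stress equation σ_d = (3/4) f_d ℓ_d²/(w_d t_d²), where f_d = F/L + m_d g 2ⁿ/L and t_d = m_d/(ρ_d w_d ℓ_d). -/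
/-!
Substituting `t_d = m / (ρ_d w_d ℓ_d)` and `ℓ_d = L / 2ⁿ` turns the stress equation into the
quadratic `m² = 2 b m + c` with `b = c₁ 2^{-3n} > 0` and `c = c₁² c₂ 2^{-4n} > 0`. Its roots
`b ± √(b² + c)` have product `-c < 0`, so exactly one of them is positive, and pulling
`c₁ 2^{-2n}` out of the square root shows that this root is the stated `m_d`.
-/

open Real

lemma rpow_neg_mul_natCast {x : ℝ} (hx : 0 ≤ x) (y : ℝ) (n : ℕ) :
    x ^ (-(y * n)) = (x ^ n)⁻¹ ^ y := by
  rw [rpow_neg hx, mul_comm, rpow_natCast_mul hx, inv_rpow (by positivity)]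

lemma sq_eq_two_mul_add_iff_eq_add_sqrt {b c m : ℝ} (hc : 0 ≤ c) (hm : 0 < m) :
    m ^ 2 = 2 * b * m + c ↔ m = b + √(b ^ 2 + c) := by
  have hs : √(b ^ 2 + c) ^ 2 = b ^ 2 + c := sq_sqrt (by positivity)
  constructor
  · intro h
    have hb : b ≤ √(b ^ 2 + c) := (le_abs_self b).trans (abs_le_sqrt (by linarith))
    have hfactor : (m - (b + √(b ^ 2 + c))) * (m - (b - √(b ^ 2 + c))) = 0 := by
      linear_combination h - hs
    have hother : m - (b - √(b ^ 2 + c)) ≠ 0 := by linarith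
    exact sub_eq_zero.1 ((mul_eq_zero.1 hfactor).resolve_right hother)
  · rintro rfl
    linear_combination hs

lemma deck_stress_eq_iff {F L g w ρ σ c₁ c₂ p m : ℝ} (hL : 0 < L) (hg : 0 < g) (hw : 0 < w)
    (hρ : 0 < ρ) (hσ : 0 < σ) (hp : 0 < p) (hm : 0 < m)
    (hc₁ : c₁ = 3 * w * g * ρ ^ 2 * L ^ 3 / (8 * σ))
    (hc₂ : c₂ = 16 * σ * F / (3 * w * g ^ 2 * L ^ 3 * ρ ^ 2)) :
    σ = 3 / 4 * ((F / L + m * g * p / L) * (L / p) ^ 2) / (w * (m / (ρ * w * (L / p))) ^ 2) ↔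
      m ^ 2 = 2 * (c₁ * p⁻¹ ^ 3) * m + (c₁ * p⁻¹ ^ 2) ^ 2 * c₂ := by
  subst hc₁ hc₂
  rw [eq_div_iff (by positivity)]
  field_simp
  constructor
  · intro h
    linear_combination 16 * h
  · intro h
    linear_combination h / 16

theorem deck_mass_unique_solution_general
    (F L g wd ρd σd : ℝ)
    (hF : 0 < F) (hL : 0 < L) (hg : 0 < g) (hwd : 0 < wd)
    (hρd : 0 < ρd) (hσd : 0 < σd)
    (n : ℕ)
    (c₁ c₂ ℓd md : ℝ)
    (hc₁ : c₁ = 3 * wd * g * ρd ^ 2 * L ^ 3 / (8 * σd))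
    (hc₂ : c₂ = 16 * σd * F / (3 * wd * g ^ 2 * L ^ 3 * ρd ^ 2))
    (hℓd : ℓd = L / 2 ^ n)
    (hmd : md = c₁ * (2 : ℝ) ^ (-(3 * (n : ℝ))) +
        c₁ * (2 : ℝ) ^ (-(2 * (n : ℝ))) *
          Real.sqrt (c₂ + (2 : ℝ) ^ (-(2 * (n : ℝ))))) :
    (0 < md ∧
      σd = 3 / 4 * ((F / L + md * g * 2 ^ n / L) * ℓd ^ 2) /
        (wd * (md / (ρd * wd * ℓd)) ^ 2)) ∧
    ∀ m : ℝ, 0 < m →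
      σd = 3 / 4 * ((F / L + m * g * 2 ^ n / L) * ℓd ^ 2) /
        (wd * (m / (ρd * wd * ℓd)) ^ 2) → m = md := by
  subst hℓd
  have hc₁_pos : 0 < c₁ := hc₁ ▸ by positivity
  have hc₂_pos : 0 < c₂ := hc₂ ▸ by positivity
  set x : ℝ := ((2 : ℝ) ^ n)⁻¹
  have hsqrt :
      √((c₁ * x ^ 3) ^ 2 + (c₁ * x ^ 2) ^ 2 * c₂) = c₁ * x ^ 2 * √(c₂ + x ^ 2) := by
    rw [show (c₁ * x ^ 3) ^ 2 + (c₁ * x ^ 2) ^ 2 * c₂ = (c₁ * x ^ 2) ^ 2 * (c₂ + x ^ 2) by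
        ring,
      sqrt_mul' _ (by positivity), sqrt_sq (by positivity)]
  have hroot : md = c₁ * x ^ 3 + √((c₁ * x ^ 3) ^ 2 + (c₁ * x ^ 2) ^ 2 * c₂) := by
    rw [hsqrt, hmd, rpow_neg_mul_natCast zero_le_two, rpow_neg_mul_natCast zero_le_two,
      rpow_ofNat, rpow_ofNat]
  have hmd_pos : 0 < md := hroot ▸ by positivity
  have hstress_iff : ∀ m, 0 < m →
      (σd = 3 / 4 * ((F / L + m * g * 2 ^ n / L) * (L / 2 ^ n) ^ 2) /
        (wd * (m / (ρd * wd * (L / 2 ^ n))) ^ 2) ↔ m = md) := fun m hm =>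
    hroot ▸ (deck_stress_eq_iff hL hg hwd hρd hσd (by positivity) hm hc₁ hc₂).trans
      (sq_eq_two_mul_add_iff_eq_add_sqrt (by positivity) hm)
  exact ⟨⟨hmd_pos, (hstress_iff md hmd_pos).2 rfl⟩, fun m hm => (hstress_iff m hm).1⟩

theorem deck_mass_unique_solution
    (F L g wd ρd σd : ℝ)
    (hF : 0 < F) (hL : 0 < L) (hg : 0 < g) (hwd : 0 < wd)
    (hρd : 0 < ρd) (hσd : 0 < σd)
    (n : ℕ) (hn : 1 ≤ n)
    (c₁ c₂ ℓd md : ℝ)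
    (hc₁ : c₁ = 3 * wd * g * ρd ^ 2 * L ^ 3 / (8 * σd))
    (hc₂ : c₂ = 16 * σd * F / (3 * wd * g ^ 2 * L ^ 3 * ρd ^ 2))
    (hℓd : ℓd = L / 2 ^ n)
    (hmd : md = c₁ * (2 : ℝ) ^ (-(3 * (n : ℝ))) +
        c₁ * (2 : ℝ) ^ (-(2 * (n : ℝ))) *
          Real.sqrt (c₂ + (2 : ℝ) ^ (-(2 * (n : ℝ))))) :
    (0 < md ∧
      σd = 3 / 4 * ((F / L + md * g * 2 ^ n / L) * ℓd ^ 2) /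
        (wd * (md / (ρd * wd * ℓd)) ^ 2)) ∧
    ∀ m : ℝ, 0 < m →
      σd = 3 / 4 * ((F / L + m * g * 2 ^ n / L) * ℓd ^ 2) /
        (wd * (m / (ρd * wd * ℓd)) ^ 2) → m = md :=
  deck_mass_unique_solution_general F L g wd ρd σd hF hL hg hwd hρd hσd n c₁ c₂ ℓd md hc₁ hc₂ hℓd
    hmd
end
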